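/- arXiv:1406.1491 — 2 statements merged into one kernel-verified Lean document; each statement's English description precedes it below -/
import Mathlib

section
/- In the free group $\langle\alpha_1,\alpha_2\rangle$ with the standard braid action of $\sigma_1$ (sending $\alpha_1 \mapsto \alpha_1\alpha_2\alpha_1^{-1}$, $\alpha_2 \mapsto \alpha_1$), define $\{\alpha_1,\alpha_2\}_n := \alpha_2^{-1}(\alpha_2 \ra \sigma_1^n)$. Then for a group $G$ and elements $a,b \in G$: the relation obtained by substituting $a,b$ into $\{\alpha_1,\alpha_2\}_{2k}=1$ is equivalent to $(ab)^k = (ba)^k$, and the relation $\{\alpha_1,\alpha_2\}_{2k+1}=1$ is equivalent to $(ab)^k a = (ba)^k b$. -/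
/-- In the free group `⟨α₁,α₂⟩` with the braid action of `σ₁`
(`α₁ ↦ α₁α₂α₁⁻¹`, `α₂ ↦ α₁`), define `{α₁,α₂}_n := α₂⁻¹ (α₂ ⟲ σ₁ⁿ)`.
For a group `G` and `a b : G`, substituting `a, b` into `{α₁,α₂}_{2k} = 1`
is equivalent to `(ab)^k = (ba)^k`, and `{α₁,α₂}_{2k+1} = 1` is equivalent to
`(ab)^k a = (ba)^k b`. -/
theorem braid_relation_explicit (G : Type*) [Group G] (a b : G) (k : ℕ) :
    let σ1 : FreeGroup (Fin 2) →* FreeGroup (Fin 2) := FreeGroup.lift (fun i =>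
      if i = 0 then FreeGroup.of 0 * FreeGroup.of 1 * (FreeGroup.of 0)⁻¹
      else FreeGroup.of 0)
    let br : ℕ → FreeGroup (Fin 2) := fun n =>
      (FreeGroup.of 1)⁻¹ * ((⇑σ1)^[n] (FreeGroup.of 1))
    let sub : FreeGroup (Fin 2) →* G := FreeGroup.lift (fun i => if i = 0 then a else b)
    (sub (br (2 * k)) = 1 ↔ (a * b) ^ k = (b * a) ^ k) ∧
    (sub (br (2 * k + 1)) = 1 ↔ (a * b) ^ k * a = (b * a) ^ k * b) := by
  intro σ1 br sub
  have hmul : ∀ n (x y : FreeGroup (Fin 2)), (⇑σ1)^[n] (x * y) = (⇑σ1)^[n] x * (⇑σ1)^[n] y := by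
    intro n
    induction n with
    | zero => intro x y; simp
    | succ n ih => intro x y; simp [Function.iterate_succ_apply, map_mul, ih]
  have hinv : ∀ n (x : FreeGroup (Fin 2)), (⇑σ1)^[n] x⁻¹ = ((⇑σ1)^[n] x)⁻¹ := by
    intro n
    induction n with
    | zero => intro x; simp
    | succ n ih => intro x; simp [Function.iterate_succ_apply, map_inv, ih]
  have h1 : σ1 (σ1 (FreeGroup.of 1)) =
      FreeGroup.of 0 * FreeGroup.of 1 * (FreeGroup.of 0)⁻¹ := by
    simp [σ1]
  have h0 : σ1 (σ1 (FreeGroup.of 0)) =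
      FreeGroup.of 0 * FreeGroup.of 1 * FreeGroup.of 0 * (FreeGroup.of 1)⁻¹ * (FreeGroup.of 0)⁻¹ := by
    simp [σ1, map_mul, map_inv]
    group
  have key : ∀ m, sub ((⇑σ1)^[2 * m] (FreeGroup.of 1)) = (a * b) ^ m * b * ((a * b) ^ m)⁻¹ ∧
      sub ((⇑σ1)^[2 * m] (FreeGroup.of 0)) = (a * b) ^ m * a * ((a * b) ^ m)⁻¹ := by
    intro m
    induction m with
    | zero => simp [sub]
    | succ m ih =>
      have e1 : 2 * (m + 1) = (2 * m) + 1 + 1 := by ring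
      constructor
      · rw [e1, Function.iterate_succ_apply, Function.iterate_succ_apply, h1]
        rw [hmul, hmul, hinv, map_mul, map_mul, map_inv, ih.1, ih.2, pow_succ]
        group
      · rw [e1, Function.iterate_succ_apply, Function.iterate_succ_apply, h0]
        rw [hmul, hmul, hmul, hmul, hinv, hinv, map_mul, map_mul, map_mul, map_mul,
          map_inv, map_inv, ih.1, ih.2, pow_succ]
        group
  have hcomm : ∀ m : ℕ, b * (a * b) ^ m = (b * a) ^ m * b := by
    intro m
    induction m with
    | zero => simp
    | succ m ih =>
      rw [pow_succ, ← mul_assoc, ih, pow_succ]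
      group
  constructor
  · have heq : sub (br (2 * k)) = b⁻¹ * ((a * b) ^ k * b * ((a * b) ^ k)⁻¹) := by
      simp only [br, map_mul, map_inv, (key k).1]
      congr 1
      simp [sub]
    rw [heq, inv_mul_eq_one, eq_comm, mul_inv_eq_iff_eq_mul, hcomm k]
    exact mul_left_inj b
  · have hiter : (⇑σ1)^[2 * k + 1] (FreeGroup.of 1) = (⇑σ1)^[2 * k] (FreeGroup.of 0) := by
      have hs : σ1 (FreeGroup.of 1) = FreeGroup.of 0 := by simp [σ1]
      rw [Function.iterate_succ_apply, hs]
    have heq : sub (br (2 * k + 1)) = b⁻¹ * ((a * b) ^ k * a * ((a * b) ^ k)⁻¹) := by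
      simp only [br, map_mul, map_inv, hiter, (key k).2]
      congr 1
      simp [sub]
    rw [heq, inv_mul_eq_one, eq_comm, mul_inv_eq_iff_eq_mul, hcomm k]
end

section
/- Let $L$ be a unimodular even lattice and $S \subset L$ a nondegenerate primitive sublattice with orthogonal complement $N = S^\perp$. Then the discriminant form of $N$ is anti-isometric to that of $S$: there is a group isomorphism $\varphi: S^\sharp/S \to N^\sharp/N$ with $q_N(\varphi(\xi)) = -q_S(\xi)$ for all $\xi$. -/
/-!
Let `P = ℚS`, so that `V = P ⊕ P⊥` and `ℚN = P⊥`. Projecting a vector `z ∈ L` to its components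
`z_S ∈ P` and `z_N ∈ P⊥` gives maps `L → S♯/S` and `L → N♯/N`. Both are onto: `L/S` is free, so
an integral functional on `S` extends to `L`, and by unimodularity it is the pairing with a vector
of `L`, whose `P`-component is then the given element of `S♯`. By primitivity both maps have the
kernel `{z | z_S ∈ S} = {z | z_N ∈ N}`, so they induce `φ`. Finally
`b(z_S, z_S) + b(z_N, z_N) = b(z, z)` is even, and changing `z_N` by a vector of `N` changes
`b(z_N, z_N)` by an even integer.
-/

open Submodule LinearMap.BilinForm

theorem Submodule.exists_retraction_of_primitive {M : Type*} [AddCommGroup M]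
    [Module.Finite ℤ M] (W : Submodule ℤ M)
    (hW : ∀ x : M, ∀ n : ℤ, n ≠ 0 → n • x ∈ W → x ∈ W) :
    ∃ ρ : M →ₗ[ℤ] W, ∀ w : W, ρ w = w := by
  have : Module.IsTorsionFree ℤ (M ⧸ W) := by
    refine .of_smul_eq_zero fun n q hnq => or_iff_not_imp_left.mpr fun hn => ?_
    obtain ⟨x, rfl⟩ := W.mkQ_surjective q
    simp only [mkQ_apply, ← Quotient.mk_smul, Quotient.mk_eq_zero] at hnq ⊢
    exact hW x n hn hnq
  obtain ⟨σ, hσ⟩ := Module.projective_lifting_property W.mkQ LinearMap.id W.mkQ_surjective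
  have hsub : ∀ x, x - σ (W.mkQ x) ∈ W := fun x => by
    rw [← Quotient.mk_eq_zero, Quotient.mk_sub, ← mkQ_apply, ← mkQ_apply,
      ← LinearMap.comp_apply W.mkQ σ, hσ, LinearMap.id_apply, sub_self]
  refine ⟨LinearMap.codRestrict W (LinearMap.id - σ ∘ₗ W.mkQ) hsub, fun w => ?_⟩
  ext
  simp [(Quotient.mk_eq_zero W).mpr w.2]

theorem LinearMap.exists_linearEquiv_apply_eq_of_ker_eq {R M A B : Type*} [Ring R]
    [AddCommGroup M] [AddCommGroup A] [AddCommGroup B] [Module R M] [Module R A] [Module R B]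
    {f : M →ₗ[R] A} {g : M →ₗ[R] B} (hf : Function.Surjective f) (hg : Function.Surjective g)
    (h : LinearMap.ker f = LinearMap.ker g) : ∃ e : A ≃ₗ[R] B, ∀ x, e (f x) = g x :=
  ⟨(f.quotKerEquivOfSurjective hf).symm ≪≫ₗ quotEquivOfEq _ _ h ≪≫ₗ
    g.quotKerEquivOfSurjective hg, fun x => by simp⟩

section

variable {V : Type*} [AddCommGroup V] [Module ℚ V] {b : LinearMap.BilinForm ℚ V}

theorem Submodule.exists_zsmul_mem_of_mem_span_rat (W : Submodule ℤ V) {v : V}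
    (hv : v ∈ span ℚ (W : Set V)) : ∃ m : ℤ, m ≠ 0 ∧ m • v ∈ W := by
  induction hv using Submodule.span_induction with
  | mem x hx => exact ⟨1, one_ne_zero, by simpa using hx⟩
  | zero => exact ⟨1, one_ne_zero, by simp⟩
  | add x y _ _ ihx ihy =>
    obtain ⟨m, hm, hmx⟩ := ihx
    obtain ⟨k, hk, hky⟩ := ihy
    refine ⟨k * m, mul_ne_zero hk hm, ?_⟩
    have : (k * m) • (x + y) = k • m • x + m • k • y := by module
    rw [this]
    exact W.add_mem (W.smul_mem k hmx) (W.smul_mem m hky)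
  | smul a x _ ih =>
    obtain ⟨m, hm, hmx⟩ := ih
    refine ⟨a.den * m, mul_ne_zero (mod_cast a.den_nz) hm, ?_⟩
    have : (a.den * m : ℤ) • a • x = a.num • m • x := by
      simp only [← Int.cast_smul_eq_zsmul ℚ, smul_smul]
      push_cast
      rw [← Rat.mul_den_eq_num]
      ring_nf
    rw [this]
    exact W.smul_mem _ hmx

theorem Submodule.finite_of_span_eq_top_of_integral [FiniteDimensional ℚ V]
    (hb : b.Nondegenerate) {L : Submodule ℤ V}
    (hfull : span ℚ (L : Set V) = ⊤) (hint : ∀ x ∈ L, ∀ y ∈ L, ∃ m : ℤ, b x y = m) :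
    Module.Finite ℤ L := by
  classical
  obtain ⟨s, hsL, hspan, hli⟩ := exists_linearIndependent ℚ (L : Set V)
  have : Finite s := hli.setFinite
  let e := Module.Basis.mk hli (by rw [Subtype.range_coe, hspan, hfull])
  have hle : L ≤ b.dualSubmodule (span ℤ (Set.range e)) := by
    refine fun x hx y hy => mem_one.mpr ?_
    have he : span ℤ (Set.range e) ≤ L :=
      span_le.mpr (by rintro _ ⟨i, rfl⟩; simpa [e] using hsL i.2)
    obtain ⟨m, hm⟩ := hint x hx y (he hy)
    exact ⟨m, by simp [hm]⟩
  rw [dualSubmodule_span_of_basis _ hb] at hle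
  have : Module.Finite ℤ (span ℤ (Set.range (b.dualBasis hb e))) :=
    Module.Finite.span_of_finite ℤ (Set.finite_range _)
  exact Module.Finite.of_injective (inclusion hle) (inclusion_injective hle)

theorem LinearMap.BilinForm.exists_forall_apply_eq_of_intLinearMap [FiniteDimensional ℚ V]
    (hb : b.Nondegenerate) (L : Submodule ℤ V)
    (F : L →ₗ[ℤ] ℚ) : ∃ x : V, ∀ z : L, b x z = F z := by
  obtain ⟨G, hG⟩ :=
    (Module.Baer.of_divisible ℚ).extension_property L.subtype L.injective_subtype F
  refine ⟨(b.toDual hb).symm G.toAddMonoidHom.toRatLinearMap, fun z => ?_⟩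
  simp [← hG]

theorem exists_mem_forall_apply_eq_of_primitive [FiniteDimensional ℚ V]
    (hb : b.Nondegenerate) {L : Submodule ℤ V} [Module.Finite ℤ L]
    (hunim : ∀ x : V, (∀ y ∈ L, ∃ m : ℤ, b x y = m) → x ∈ L)
    {W : Submodule ℤ V} (hWL : W ≤ L) (hW : ∀ x ∈ L, ∀ n : ℤ, n ≠ 0 → n • x ∈ W → x ∈ W)
    {ξ : V} (hξ : ∀ y ∈ W, ∃ m : ℤ, b ξ y = m) : ∃ x ∈ L, ∀ y ∈ W, b x y = b ξ y := by
  obtain ⟨ρ, hρ⟩ := (W.comap L.subtype).exists_retraction_of_primitive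
    fun x n hn hx => hW x x.2 n hn hx
  obtain ⟨x, hx⟩ := exists_forall_apply_eq_of_intLinearMap hb L
    ((b ξ).restrictScalars ℤ ∘ₗ L.subtype ∘ₗ (W.comap L.subtype).subtype ∘ₗ ρ)
  refine ⟨x, hunim x fun y hy => ?_, fun y hy => ?_⟩
  · rw [hx ⟨y, hy⟩]
    exact hξ _ (ρ ⟨y, hy⟩).2
  · rw [hx ⟨y, hWL hy⟩]
    simp [hρ ⟨⟨y, hWL hy⟩, hy⟩]

theorem eq_zero_of_mem_span_of_forall_apply_eq_zero {S : Submodule ℤ V}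
    (hndS : ∀ x ∈ S, (∀ y ∈ S, b x y = 0) → x = 0) {u : V} (hu : u ∈ span ℚ (S : Set V))
    (h : ∀ y ∈ span ℚ (S : Set V), b u y = 0) : u = 0 := by
  obtain ⟨m, hm, hmu⟩ := S.exists_zsmul_mem_of_mem_span_rat hu
  have : (m : ℚ) • u = 0 := by
    rw [Int.cast_smul_eq_zsmul]
    refine hndS _ hmu fun y hy => ?_
    rw [← Int.cast_smul_eq_zsmul ℚ, map_smul, LinearMap.smul_apply, h y (subset_span hy),
      smul_zero]
  exact (smul_eq_zero.mp this).resolve_left (Int.cast_ne_zero.mpr hm)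

theorem isCompl_span_orthogonal [FiniteDimensional ℚ V] (hsymm : ∀ x y, b x y = b y x)
    {S : Submodule ℤ V} (hndS : ∀ x ∈ S, (∀ y ∈ S, b x y = 0) → x = 0) :
    IsCompl (span ℚ (S : Set V)) (b.orthogonal (span ℚ (S : Set V))) := by
  refine (isCompl_orthogonal_iff_disjoint fun x y h => (hsymm y x).trans h).mpr
    (disjoint_def.mpr fun u hu hu' => eq_zero_of_mem_span_of_forall_apply_eq_zero hndS hu
      fun y hy => (hsymm u y).trans (hu' y hy))

theorem eq_zero_of_mem_orthogonal_of_forall_apply_eq_zero (hsymm : ∀ x y, b x y = b y x)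
    (hnd : ∀ x : V, (∀ y : V, b x y = 0) → x = 0) {P : Submodule ℚ V}
    (hPO : IsCompl P (b.orthogonal P)) {u : V} (hu : u ∈ b.orthogonal P)
    (h : ∀ y ∈ b.orthogonal P, b u y = 0) : u = 0 := by
  refine hnd u fun v => ?_
  rw [← projection_add_projection_eq_self hPO v, map_add, hsymm,
    hu _ (projection_apply_mem hPO v), h _ (projection_apply_mem hPO.symm v), zero_add]

theorem mem_of_zsmul_mem_orthogonal {L S N : Submodule ℤ V}
    (hN : ∀ x, x ∈ N ↔ x ∈ L ∧ ∀ y ∈ S, b x y = 0) :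
    ∀ x ∈ L, ∀ n : ℤ, n ≠ 0 → n • x ∈ N → x ∈ N := fun x hx n hn hnx =>
  (hN x).mpr ⟨hx, fun y hy => by simpa [hn] using ((hN _).mp hnx).2 y hy⟩

theorem apply_projection_eq {P Q : Submodule ℚ V} (hPQ : IsCompl P Q)
    (hQP : ∀ q ∈ Q, ∀ p ∈ P, b q p = 0) (z : V) {y : V} (hy : y ∈ P) :
    b (P.projection Q hPQ z) y = b z y := by
  conv_rhs => rw [← projection_add_projection_eq_self hPQ z]
  rw [map_add, LinearMap.add_apply, hQP _ (projection_apply_mem hPQ.symm z) y hy, add_zero]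

theorem span_eq_orthogonal_span (hsymm : ∀ x y, b x y = b y x) {L S N : Submodule ℤ V}
    (hfull : span ℚ (L : Set V) = ⊤) (hN : ∀ x, x ∈ N ↔ x ∈ L ∧ ∀ y ∈ S, b x y = 0) :
    span ℚ (N : Set V) = b.orthogonal (span ℚ (S : Set V)) := by
  refine le_antisymm (span_le.mpr fun v hv s hs => ?_) fun v hv => ?_
  · have : span ℚ (S : Set V) ≤ LinearMap.ker (b.flip v) := span_le.mpr fun y hy => by
      simpa [hsymm y v] using ((hN v).mp hv).2 y hy
    exact this hs
  · obtain ⟨m, hm, hmv⟩ := L.exists_zsmul_mem_of_mem_span_rat (hfull ▸ mem_top : v ∈ _)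
    have hmvN : m • v ∈ N := (hN _).mpr ⟨hmv, fun y hy => by
      rw [← Int.cast_smul_eq_zsmul ℚ, map_smul, LinearMap.smul_apply, hsymm,
        hv y (subset_span hy), smul_zero]⟩
    rw [← smul_mem_iff _ (Int.cast_ne_zero.mpr hm : (m : ℚ) ≠ 0), Int.cast_smul_eq_zsmul]
    exact subset_span hmvN

theorem exists_surjective_projection [FiniteDimensional ℚ V] (hb : b.Nondegenerate)
    {L : Submodule ℤ V} [Module.Finite ℤ L] (hint : ∀ x ∈ L, ∀ y ∈ L, ∃ m : ℤ, b x y = m)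
    (hunim : ∀ x : V, (∀ y ∈ L, ∃ m : ℤ, b x y = m) → x ∈ L)
    {W : Submodule ℤ V} (hWL : W ≤ L) (hWprim : ∀ x ∈ L, ∀ n : ℤ, n ≠ 0 → n • x ∈ W → x ∈ W)
    {Ws : Submodule ℤ V}
    (hWs : ∀ x, x ∈ Ws ↔ x ∈ span ℚ (W : Set V) ∧ ∀ y ∈ W, ∃ m : ℤ, b x y = m)
    {P Q : Submodule ℚ V} (hWP : span ℚ (W : Set V) = P) (hPQ : IsCompl P Q)
    (hQP : ∀ q ∈ Q, ∀ p ∈ P, b q p = 0) (hPnd : ∀ u ∈ P, (∀ y ∈ P, b u y = 0) → u = 0) :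
    ∃ f : L →ₗ[ℤ] Ws, Function.Surjective f ∧ ∀ z : L, (f z : V) = P.projection Q hPQ z := by
  have hmem (z : L) : P.projection Q hPQ z ∈ Ws := (hWs _).mpr
    ⟨hWP ▸ projection_apply_mem hPQ z, fun y hy => by
      rw [apply_projection_eq hPQ hQP z (hWP ▸ subset_span hy)]
      exact hint _ z.2 _ (hWL hy)⟩
  refine ⟨LinearMap.codRestrict Ws ((P.projection Q hPQ).restrictScalars ℤ ∘ₗ L.subtype) hmem,
    fun ξ => ?_, fun z => rfl⟩
  obtain ⟨hξP, hξ⟩ := (hWs ξ).mp ξ.2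
  obtain ⟨x, hxL, hx⟩ := exists_mem_forall_apply_eq_of_primitive hb hunim hWL hWprim hξ
  set u := P.projection Q hPQ x - ξ
  have hker : P ≤ LinearMap.ker (b u) := hWP ▸ span_le.mpr fun y hy => by
    rw [SetLike.mem_coe, LinearMap.mem_ker, map_sub, LinearMap.sub_apply,
      apply_projection_eq hPQ hQP x (hWP ▸ subset_span hy), hx y hy, sub_self]
  have hu : u = 0 := hPnd u (sub_mem (projection_apply_mem hPQ x) (hWP ▸ hξP)) fun y hy => hker hy
  exact ⟨⟨x, hxL⟩, Subtype.ext (sub_eq_zero.mp hu)⟩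

theorem projection_mem_iff_projection_mem (hsymm : ∀ x y, b x y = b y x)
    {L S N : Submodule ℤ V} (hS : S ≤ L) (hprim : ∀ x ∈ L, ∀ n : ℤ, n ≠ 0 → n • x ∈ S → x ∈ S)
    (hN : ∀ x, x ∈ N ↔ x ∈ L ∧ ∀ y ∈ S, b x y = 0)
    (hPO : IsCompl (span ℚ (S : Set V)) (b.orthogonal (span ℚ (S : Set V)))) {z : V}
    (hz : z ∈ L) :
    (span ℚ (S : Set V)).projection _ hPO z ∈ S ↔ (b.orthogonal _).projection _ hPO.symm z ∈ N := by
  have hsum := projection_add_projection_eq_self hPO z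
  constructor
  · intro hs
    refine (hN _).mpr ⟨?_, fun y hy => ?_⟩
    · rw [eq_sub_of_add_eq' hsum]
      exact sub_mem hz (hS hs)
    · rw [hsymm]
      exact projection_apply_mem hPO.symm z y (subset_span hy)
  · intro ho
    obtain ⟨m, hm, hms⟩ := S.exists_zsmul_mem_of_mem_span_rat (projection_apply_mem hPO z)
    refine hprim _ ?_ m hm hms
    rw [eq_sub_of_add_eq hsum]
    exact sub_mem hz ((hN _).mp ho).1

theorem exists_apply_self_add_apply_self_eq_two_mul (hsymm : ∀ x y, b x y = b y x)
    {L N : Submodule ℤ V} (heven : ∀ x ∈ L, ∃ m : ℤ, b x x = 2 * m) (hNL : N ≤ L)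
    {s o y : V} (hz : s + o ∈ L) (hso : b s o = 0) (ho : ∀ v ∈ N, ∃ m : ℤ, b o v = m)
    (hyo : y - o ∈ N) : ∃ m : ℤ, b y y + b s s = 2 * m := by
  obtain ⟨k, hk⟩ := heven _ hz
  obtain ⟨l, hl⟩ := heven _ (hNL hyo)
  obtain ⟨c, hc⟩ := ho _ hyo
  refine ⟨k + c + l, ?_⟩
  rw [← sub_add_cancel y o]
  simp only [map_add, LinearMap.add_apply] at hk ⊢
  rw [hsymm o s, hso] at hk
  rw [hsymm (y - o) o, hc]
  push_cast
  linarith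

end

/-- Let `L` be a unimodular even lattice (a full integral even lattice in a
finite-dimensional `ℚ`-vector space, equal to its own dual) and `S ⊆ L` a
nondegenerate primitive sublattice with orthogonal complement `N = S^⊥`.
Then the discriminant form of `N` is anti-isometric to that of `S`: there is a
group isomorphism `φ : S♯/S → N♯/N` with `q_N(φ(ξ)) = -q_S(ξ)` for all `ξ`. -/
theorem discriminant_anti_isometry_of_primitive_sublattice
    (V : Type*) [AddCommGroup V] [Module ℚ V] [FiniteDimensional ℚ V]
    (b : V →ₗ[ℚ] V →ₗ[ℚ] ℚ) (hsymm : ∀ x y, b x y = b y x)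
    (hnd : ∀ x : V, (∀ y : V, b x y = 0) → x = 0)
    (L : Submodule ℤ V)
    (hfull : Submodule.span ℚ (L : Set V) = ⊤)
    (hint : ∀ x ∈ L, ∀ y ∈ L, ∃ m : ℤ, b x y = m)
    (heven : ∀ x ∈ L, ∃ m : ℤ, b x x = 2 * m)
    -- unimodularity: `L` equals its dual lattice
    (hunim : ∀ x : V, (∀ y ∈ L, ∃ m : ℤ, b x y = m) → x ∈ L)
    (S : Submodule ℤ V) (hS : S ≤ L)
    -- `S` is primitive in `L`
    (hprim : ∀ x ∈ L, ∀ n : ℤ, n ≠ 0 → n • x ∈ S → x ∈ S)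
    -- `S` is nondegenerate
    (hndS : ∀ x ∈ S, (∀ y ∈ S, b x y = 0) → x = 0)
    -- `N = S^⊥` in `L`
    (N : Submodule ℤ V) (hN : ∀ x, x ∈ N ↔ x ∈ L ∧ ∀ y ∈ S, b x y = 0)
    -- dual lattices `S♯ ⊆ S ⊗ ℚ` and `N♯ ⊆ N ⊗ ℚ`
    (Ss : Submodule ℤ V) (hSs : ∀ x, x ∈ Ss ↔
      x ∈ Submodule.span ℚ (S : Set V) ∧ ∀ y ∈ S, ∃ m : ℤ, b x y = m)
    (Ns : Submodule ℤ V) (hNs : ∀ x, x ∈ Ns ↔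
      x ∈ Submodule.span ℚ (N : Set V) ∧ ∀ y ∈ N, ∃ m : ℤ, b x y = m) :
    ∃ φ : (Ss ⧸ S.comap Ss.subtype) ≃+ (Ns ⧸ N.comap Ns.subtype),
      ∀ (x : Ss) (y : Ns),
        φ (Submodule.Quotient.mk x) = Submodule.Quotient.mk y →
        ∃ m : ℤ, b (y : V) (y : V) + b (x : V) (x : V) = 2 * m := by
  have hb : b.Nondegenerate :=
    (LinearMap.IsRefl.nondegenerate_iff_separatingLeft fun x y h => (hsymm y x).trans h).mpr hnd
  have := finite_of_span_eq_top_of_integral hb hfull hint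
  have hPO := isCompl_span_orthogonal hsymm hndS
  have hNL : N ≤ L := fun x hx => ((hN x).mp hx).1
  obtain ⟨fS, hfS, hfS_apply⟩ := exists_surjective_projection hb hint hunim hS hprim hSs rfl hPO
    (fun o ho p hp => (hsymm o p).trans (ho p hp))
    (fun _ => eq_zero_of_mem_span_of_forall_apply_eq_zero hndS)
  obtain ⟨fN, hfN, hfN_apply⟩ := exists_surjective_projection hb hint hunim hNL
    (mem_of_zsmul_mem_orthogonal hN) hNs (span_eq_orthogonal_span hsymm hfull hN) hPO.symm
    (fun p hp o ho => ho p hp)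
    (fun _ => eq_zero_of_mem_orthogonal_of_forall_apply_eq_zero hsymm hnd hPO)
  obtain ⟨φ, hφ⟩ := LinearMap.exists_linearEquiv_apply_eq_of_ker_eq
    (f := (S.comap Ss.subtype).mkQ ∘ₗ fS) (g := (N.comap Ns.subtype).mkQ ∘ₗ fN)
    ((mkQ_surjective _).comp hfS) ((mkQ_surjective _).comp hfN) <| by
      ext z
      simp [Quotient.mk_eq_zero, hfS_apply, hfN_apply,
        projection_mem_iff_projection_mem hsymm hS hprim hN hPO z.2]
  refine ⟨φ.toAddEquiv, fun x y hxy => ?_⟩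
  obtain ⟨z, rfl⟩ := hfS x
  have hyz : fN z - y ∈ N.comap Ns.subtype :=
    (Submodule.Quotient.eq _).mp ((hφ z).symm.trans hxy)
  refine exists_apply_self_add_apply_self_eq_two_mul hsymm heven hNL ?_ ?_
    ((hNs _).mp (fN z).2).2 (by simpa using N.neg_mem hyz)
  · rw [hfS_apply, hfN_apply, projection_add_projection_eq_self]
    exact z.2
  · rw [hfS_apply, hfN_apply]
    exact projection_apply_mem hPO.symm z _ (projection_apply_mem hPO z)
end
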